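/- Let t be a linear term and s = C[tδ] a term containing an occurrence of t at the hole position π₁ of context C, where π₁ is an innermost occurrence among a maximal set of pairwise non-overlapping occurrences of t in s. If u is any term with the same variables constraints (V(u) ⊆ V(t)), then maxNO(t, C[uδ]) ≥ maxNO(t, u) + maxNO(t, s) − 1. -/

import Mathlib

inductive Tm (S V : Type) : Type
  | var : V → Tm S V
  | app : S → List (Tm S V) → Tm S V

namespace Tm
variable {S V : Type}

def subst (σ : V → Tm S V) : Tm S V → Tm S V
  | var x => σ x
  | app f ts => app f (ts.attach.map fun u => subst σ u.1)
decreasing_by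
  have := List.sizeOf_lt_of_mem u.2
  simp only [Tm.app.sizeOf_spec]
  omega

inductive Occurs (x : V) : Tm S V → Prop
  | var : Occurs x (var x)
  | app {f : S} {ts : List (Tm S V)} {t : Tm S V} :
      t ∈ ts → Occurs x t → Occurs x (app f ts)

def iter (σ : V → Tm S V) (n : ℕ) (t : Tm S V) : Tm S V :=
  (subst σ)^[n] t

/-- The subterm of `t` at position `π`, if `π` is a position of `t`. -/
def subtermAt : Tm S V → List ℕ → Option (Tm S V)
  | t, [] => some t
  | var _, _ :: _ => none
  | app _ [], _ :: _ => none
  | app _ (u :: _), 0 :: π => subtermAt u π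
  | app f (_ :: ts), (i + 1) :: π => subtermAt (app f ts) (i :: π)

/-- `t` matches `s` at position `π`. -/
def Matches (t s : Tm S V) (π : List ℕ) : Prop :=
  ∃ σ : V → Tm S V, subtermAt s π = some (subst σ t)

/-- `π` is a non-variable (function symbol) position of `t`. -/
def IsAppPos (t : Tm S V) (π : List ℕ) : Prop :=
  ∃ (f : S) (ts : List (Tm S V)), subtermAt t π = some (app f ts)

/-- `π₁` and `π₂` are overlapping w.r.t. `t`. -/
def Overlap (t : Tm S V) (π₁ π₂ : List ℕ) : Prop :=
  ∃ τ, IsAppPos t τ ∧ (π₁ = π₂ ++ τ ∨ π₂ = π₁ ++ τ)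

/-- `Sset` is a set of pairwise non-overlapping occurrences of `t` in `s`. -/
def NOSet (t s : Tm S V) (Sset : Finset (List ℕ)) : Prop :=
  (∀ π ∈ Sset, Matches t s π) ∧
  (∀ π₁ ∈ Sset, ∀ π₂ ∈ Sset, π₁ ≠ π₂ → ¬ Overlap t π₁ π₂)

/-- Maximal number of pairwise non-overlapping occurrences of `t` in `s`. -/
noncomputable def maxNO (t s : Tm S V) : ℕ :=
  sSup {n | ∃ Sset : Finset (List ℕ), NOSet t s Sset ∧ Sset.card = n}

mutual
  /-- Replace the subterm of `t` at position `π` by `r`. -/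
  def replaceAt : Tm S V → List ℕ → Tm S V → Tm S V
    | _, [], r => r
    | var x, _ :: _, _ => var x
    | app f ts, i :: π, r => app f (replaceArg ts i π r)
  def replaceArg : List (Tm S V) → ℕ → List ℕ → Tm S V → List (Tm S V)
    | [], _, _, _ => []
    | u :: ts, 0, π, r => replaceAt u π r :: ts
    | u :: ts, i + 1, π, r => u :: replaceArg ts i π r
end

/-- The number of positions of a term. -/
def size : Tm S V → ℕ
  | var _ => 1
  | app _ [] => 1
  | app f (u :: ts) => size u + size (app f ts)

/-- The list of variable positions of a term. -/
def varPositions : Tm S V → List (List ℕ)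
  | var _ => [[]]
  | app _ [] => []
  | app f (u :: ts) =>
      (varPositions u).map (0 :: ·) ++
      (varPositions (app f ts)).map
        (fun π => match π with | i :: π' => (i + 1) :: π' | [] => [])

/-- `t` is linear: every variable occurs at most once. -/
def Linear (t : Tm S V) : Prop :=
  ∀ (x : V) (π₁ π₂ : List ℕ), subtermAt t π₁ = some (var x) →
    subtermAt t π₂ = some (var x) → π₁ = π₂

end Tm

/-! Let `T` be a maximum non-overlapping set of occurrences of `t` in `u`. Shifted by `π₁`, its
positions are occurrences of `t` in `C[uδ]`, and together with `Sset \ {π₁}` they remain pairwise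
non-overlapping. The old occurrences survive the replacement: none lies below `π₁` since `π₁` is
innermost, those parallel to `π₁` are untouched, and for one above `π₁` non-overlap forces `π₁`
below a variable position of `t`; that variable occurs only once in the linear `t`, so the
replacement is absorbed by changing the matching substitution at that variable. -/

theorem List.prefix_or_prefix_or_exists_fork {α : Type*} :
    ∀ p q : List α, p <+: q ∨ q <+: p ∨
      ∃ c a b l₁ l₂, a ≠ b ∧ p = c ++ a :: l₁ ∧ q = c ++ b :: l₂
  | [], _ => Or.inl List.nil_prefix
  | _ :: _, [] => Or.inr (Or.inl List.nil_prefix)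
  | a :: p, b :: q => by
    obtain rfl | hab := eq_or_ne a b
    · rcases List.prefix_or_prefix_or_exists_fork p q with h | h | ⟨c, a', b', l₁, l₂, h, rfl, rfl⟩
      · exact Or.inl (List.cons_prefix_cons.2 ⟨rfl, h⟩)
      · exact Or.inr (Or.inl (List.cons_prefix_cons.2 ⟨rfl, h⟩))
      · exact Or.inr (Or.inr ⟨a :: c, a', b', l₁, l₂, h, rfl, rfl⟩)
    · exact Or.inr (Or.inr ⟨[], a, b, p, q, hab, rfl, rfl⟩)

theorem card_erase_union_image_append {α : Type*} [DecidableEq α] {A T : Finset (List α)}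
    {π₁ : List α} (hπ₁ : π₁ ∈ A) (hinner : ∀ π ∈ A, ∀ τ, π = π₁ ++ τ → τ = []) :
    (A.erase π₁ ∪ T.image (π₁ ++ ·)).card = A.card - 1 + T.card := by
  have hdisj : Disjoint (A.erase π₁) (T.image (π₁ ++ ·)) := by
    refine Finset.disjoint_left.2 fun π hπ hπT => ?_
    obtain ⟨ρ, -, rfl⟩ := Finset.mem_image.1 hπT
    obtain rfl := hinner _ (Finset.mem_of_mem_erase hπ) ρ rfl
    simp at hπ
  rw [Finset.card_union_of_disjoint hdisj, Finset.card_erase_of_mem hπ₁,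
    Finset.card_image_of_injective _ (List.append_right_injective π₁)]

namespace Tm
variable {S V : Type}

@[elab_as_elim]
theorem ind {motive : Tm S V → Prop} (hvar : ∀ x, motive (var x))
    (happ : ∀ f ts, (∀ u ∈ ts, motive u) → motive (app f ts)) : ∀ t, motive t
  | var x => hvar x
  | app f ts => happ f ts fun u _ => ind hvar happ u
decreasing_by
  have := List.sizeOf_lt_of_mem ‹u ∈ ts›
  simp only [Tm.app.sizeOf_spec]
  omega

section Subst

variable (σ : V → Tm S V)

@[simp]
theorem subst_var (x : V) : subst σ (var x) = σ x := by
  rw [subst]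

@[simp]
theorem subst_app (f : S) (ts : List (Tm S V)) :
    subst σ (app f ts) = app f (ts.map (subst σ)) := by
  rw [subst, List.attach_map_val (f := subst σ)]

theorem subst_subst (δ : V → Tm S V) (t : Tm S V) :
    subst δ (subst σ t) = subst (fun x => subst δ (σ x)) t := by
  induction t using ind with
  | hvar x => simp
  | happ f ts ih => simpa using List.map_congr_left ih

end Subst

@[simp]
theorem subtermAt_nil (t : Tm S V) : subtermAt t [] = some t := by
  rw [subtermAt]

@[simp]
theorem subtermAt_var_cons (x : V) (i : ℕ) (π : List ℕ) :
    subtermAt (var x : Tm S V) (i :: π) = none := by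
  rw [subtermAt]

theorem subtermAt_app_cons (f : S) :
    ∀ (ts : List (Tm S V)) (i : ℕ) (π : List ℕ),
      subtermAt (app f ts) (i :: π) = ts[i]?.bind (subtermAt · π)
  | [], _, _ => by simp [subtermAt]
  | u :: ts, 0, π => by simp [subtermAt]
  | u :: ts, i + 1, π => by simp [subtermAt, subtermAt_app_cons f ts i π]

theorem subtermAt_append (t : Tm S V) (π ρ : List ℕ) :
    subtermAt t (π ++ ρ) = (subtermAt t π).bind (subtermAt · ρ) := by
  induction π generalizing t with
  | nil => simp
  | cons i π ih =>
    cases t with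
    | var x => simp
    | app f ts =>
      rw [List.cons_append, subtermAt_app_cons, subtermAt_app_cons]
      cases ts[i]? <;> simp [ih]

theorem subst_congr {σ σ' : V → Tm S V} (t : Tm S V)
    (h : ∀ π x, subtermAt t π = some (var x) → σ x = σ' x) :
    subst σ t = subst σ' t := by
  induction t using ind with
  | hvar x => simpa using h [] x (subtermAt_nil _)
  | happ f ts ih =>
    simp only [subst_app, app.injEq, true_and, List.map_inj_left]
    intro u hu
    obtain ⟨i, hi⟩ := List.mem_iff_getElem?.1 hu
    exact ih u hu fun π x hx => h (i :: π) x (by simp [subtermAt_app_cons, hi, hx])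

theorem subtermAt_subst (σ : V → Tm S V) {t v : Tm S V} {π : List ℕ}
    (h : subtermAt t π = some v) : subtermAt (subst σ t) π = some (subst σ v) := by
  induction π generalizing t with
  | nil => simp_all
  | cons i π ih =>
    cases t with
    | var x => simp at h
    | app f ts =>
      rw [subtermAt_app_cons] at h
      obtain ⟨u, hu, huv⟩ := Option.bind_eq_some_iff.1 h
      simp [subtermAt_app_cons, hu, ih huv]

theorem IsAppPos.of_append {t : Tm S V} {π ρ : List ℕ} (h : IsAppPos t (π ++ ρ)) :
    IsAppPos t π := by
  obtain ⟨f, ts, h⟩ := h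
  rw [subtermAt_append] at h
  obtain ⟨v, hv, hvρ⟩ := Option.bind_eq_some_iff.1 h
  cases v with
  | var x => cases ρ <;> simp at hvρ
  | app g us => exact ⟨g, us, hv⟩

theorem isAppPos_or_exists_var_of_subtermAt_subst (σ : V → Tm S V) {t v : Tm S V}
    {π : List ℕ} (h : subtermAt (subst σ t) π = some v) :
    IsAppPos t π ∨
      ∃ a b x, π = a ++ b ∧ subtermAt t a = some (var x) ∧ subtermAt (σ x) b = some v := by
  induction π generalizing t with
  | nil =>
    cases t with
    | var x => exact Or.inr ⟨[], [], x, rfl, subtermAt_nil _, by simpa using h⟩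
    | app f ts => exact Or.inl ⟨f, ts, subtermAt_nil _⟩
  | cons i π ih =>
    cases t with
    | var x => exact Or.inr ⟨[], i :: π, x, rfl, subtermAt_nil _, by simpa using h⟩
    | app f ts =>
      rw [subst_app, subtermAt_app_cons, List.getElem?_map] at h
      obtain ⟨w, hw, hwv⟩ := Option.bind_eq_some_iff.1 h
      obtain ⟨u, hu, rfl⟩ := Option.map_eq_some_iff.1 hw
      have hsub : ∀ ρ, subtermAt (app f ts) (i :: ρ) = subtermAt u ρ := by
        simp [subtermAt_app_cons, hu]
      rcases ih hwv with ⟨g, us, happ⟩ | ⟨a, b, x, rfl, ha, hb⟩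
      · exact Or.inl ⟨g, us, by rw [hsub, happ]⟩
      · exact Or.inr ⟨i :: a, b, x, rfl, by rw [hsub, ha], hb⟩

section ReplaceAt

variable (r : Tm S V)

@[simp]
theorem replaceAt_nil (s : Tm S V) : replaceAt s [] r = r := by
  rw [replaceAt]

@[simp]
theorem replaceAt_var_cons (x : V) (i : ℕ) (π : List ℕ) :
    replaceAt (var x) (i :: π) r = var x := by
  rw [replaceAt]

theorem replaceArg_eq_modify (π : List ℕ) :
    ∀ (ts : List (Tm S V)) (i : ℕ), replaceArg ts i π r = ts.modify i (replaceAt · π r)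
  | [], _ => by simp [replaceArg]
  | u :: ts, 0 => by simp [replaceArg]
  | u :: ts, i + 1 => by simp [replaceArg, replaceArg_eq_modify π ts i]

@[simp]
theorem replaceAt_app_cons (f : S) (ts : List (Tm S V)) (i : ℕ) (π : List ℕ) :
    replaceAt (app f ts) (i :: π) r = app f (ts.modify i (replaceAt · π r)) := by
  rw [replaceAt, replaceArg_eq_modify]

theorem subtermAt_replaceAt_append_left (s : Tm S V) (π τ : List ℕ) :
    subtermAt (replaceAt s (π ++ τ) r) π = (subtermAt s π).map (replaceAt · τ r) := by
  induction π generalizing s with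
  | nil => simp
  | cons i π ih =>
    cases s with
    | var x => simp
    | app f ts =>
      rw [List.cons_append, replaceAt_app_cons, subtermAt_app_cons, subtermAt_app_cons,
        List.getElem?_modify_eq]
      cases ts[i]? <;> simp [ih]

theorem subtermAt_replaceAt_append {s v : Tm S V} {π : List ℕ} (h : subtermAt s π = some v)
    (ρ : List ℕ) : subtermAt (replaceAt s π r) (π ++ ρ) = subtermAt r ρ := by
  have hπ := subtermAt_replaceAt_append_left r s π []
  rw [List.append_nil] at hπ
  simp [subtermAt_append, hπ, h]

theorem subtermAt_replaceAt_of_ne (s : Tm S V) (c α β : List ℕ) {a b : ℕ} (hab : a ≠ b) :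
    subtermAt (replaceAt s (c ++ a :: α) r) (c ++ b :: β) = subtermAt s (c ++ b :: β) := by
  rw [subtermAt_append, subtermAt_replaceAt_append_left, subtermAt_append]
  cases subtermAt s c with
  | none => rfl
  | some w =>
    cases w with
    | var x => simp
    | app f ts => simp [subtermAt_app_cons, List.getElem?_modify_ne _ _ hab]

theorem replaceAt_subst_of_unique_var [DecidableEq V] (σ : V → Tm S V) (x : V) (b : List ℕ) :
    ∀ (t : Tm S V) (a : List ℕ), subtermAt t a = some (var x) →
      (∀ π, subtermAt t π = some (var x) → π = a) →
      replaceAt (subst σ t) (a ++ b) r = subst (Function.update σ x (replaceAt (σ x) b r)) t := by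
  intro t
  induction t using ind with
  | hvar y =>
    rintro (_ | ⟨i, a⟩) ha -
    · obtain rfl : y = x := by simpa using ha
      simp
    · simp at ha
  | happ f ts ih =>
    rintro (_ | ⟨i, a⟩) ha huniq
    · simp at ha
    rw [subtermAt_app_cons] at ha
    obtain ⟨w, hw, hwa⟩ := Option.bind_eq_some_iff.1 ha
    have hpos : ∀ j π u, ts[j]? = some u → subtermAt u π = some (var x) → j = i ∧ π = a :=
      fun j π u hu hπ => List.cons_eq_cons.1 (huniq (j :: π) (by simp [subtermAt_app_cons, hu, hπ]))
    simp only [subst_app, List.cons_append, replaceAt_app_cons, app.injEq, true_and]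
    refine List.ext_getElem? fun j => ?_
    rcases eq_or_ne i j with rfl | hij
    · simp [List.getElem?_map, hw,
        ih w (List.mem_of_getElem? hw) a hwa fun π hπ => (hpos i π w hw hπ).2]
    · rw [List.getElem?_modify_ne _ _ hij, List.getElem?_map, List.getElem?_map]
      cases hu : ts[j]? with
      | none => rfl
      | some u =>
        refine congrArg some (subst_congr u fun π y hy => ?_)
        have hyx : y ≠ x := by
          rintro rfl
          exact hij (hpos j π u hu hy).1.symm
        simp [Function.update_of_ne hyx]

end ReplaceAt

theorem Overlap.symm {t : Tm S V} {π₁ π₂ : List ℕ} (h : Overlap t π₁ π₂) : Overlap t π₂ π₁ :=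
  let ⟨τ, hτ, h⟩ := h
  ⟨τ, hτ, h.symm⟩

@[simp]
theorem overlap_append_append_iff {t : Tm S V} {π ρ₁ ρ₂ : List ℕ} :
    Overlap t (π ++ ρ₁) (π ++ ρ₂) ↔ Overlap t ρ₁ ρ₂ := by
  simp only [Overlap, List.append_assoc, List.append_cancel_left_eq]

theorem Matches.replaceAt {t s v r : Tm S V} {π π₁ : List ℕ} (hlin : Linear t)
    (hπ : Matches t s π) (hocc : subtermAt s π₁ = some v) (hov : ¬ Overlap t π π₁)
    (hbelow : ¬ π₁ <+: π) : Matches t (s.replaceAt π₁ r) π := by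
  obtain ⟨σ, hσ⟩ := hπ
  rcases List.prefix_or_prefix_or_exists_fork π π₁ with
    ⟨τ, rfl⟩ | hπ₁ | ⟨c, a, b, l₁, l₂, hab, rfl, rfl⟩
  · rw [subtermAt_append, hσ, Option.bind_some] at hocc
    rcases isAppPos_or_exists_var_of_subtermAt_subst σ hocc with happ | ⟨a, b, x, rfl, ha, -⟩
    · exact absurd ⟨τ, happ, Or.inr rfl⟩ hov
    -- by linearity `a` is the only position of `x`, so the replacement is absorbed into `σ x`
    classical
    refine ⟨Function.update σ x (Tm.replaceAt (σ x) b r), ?_⟩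
    rw [subtermAt_replaceAt_append_left, hσ, Option.map_some,
      replaceAt_subst_of_unique_var r σ x b t a ha fun π' h' => hlin x π' a h' ha]
  · exact absurd hπ₁ hbelow
  · exact ⟨σ, by rw [subtermAt_replaceAt_of_ne r s c l₂ l₁ hab.symm, hσ]⟩

theorem Matches.replaceAt_append {t s v r : Tm S V} {π ρ : List ℕ}
    (hocc : subtermAt s π = some v) (h : Matches t r ρ) :
    Matches t (s.replaceAt π r) (π ++ ρ) :=
  let ⟨σ, hσ⟩ := h
  ⟨σ, by rw [subtermAt_replaceAt_append r hocc, hσ]⟩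

theorem Matches.subst {t u : Tm S V} {ρ : List ℕ} (h : Matches t u ρ) (δ : V → Tm S V) :
    Matches t (u.subst δ) ρ :=
  let ⟨σ, hσ⟩ := h
  ⟨fun x => Tm.subst δ (σ x), by rw [subtermAt_subst δ hσ, subst_subst]⟩

theorem not_overlap_append {t : Tm S V} {π π₁ : List ℕ} (hov : ¬ Overlap t π π₁)
    (hbelow : ¬ π₁ <+: π) (ρ : List ℕ) : ¬ Overlap t π (π₁ ++ ρ) := by
  rintro ⟨τ, happ, h | h⟩
  · exact hbelow ⟨ρ ++ τ, by rw [h, List.append_assoc]⟩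
  rcases List.prefix_or_prefix_of_prefix (List.prefix_append π₁ ρ)
      (h ▸ List.prefix_append π τ) with hπ₁ | ⟨γ, rfl⟩
  · exact hbelow hπ₁
  rw [List.append_assoc, List.append_cancel_left_eq] at h
  exact hov ⟨γ, (h ▸ happ).of_append, Or.inr rfl⟩

theorem NOSet.subst {t u : Tm S V} {T : Finset (List ℕ)} (h : NOSet t u T) (δ : V → Tm S V) :
    NOSet t (u.subst δ) T :=
  ⟨fun ρ hρ => (h.1 ρ hρ).subst δ, h.2⟩

theorem NOSet.replaceAt {t s v r : Tm S V} {A T : Finset (List ℕ)} {π₁ : List ℕ}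
    (hlin : Linear t) (hA : NOSet t s A) (hπ₁ : π₁ ∈ A) (hocc : subtermAt s π₁ = some v)
    (hinner : ∀ π ∈ A, ∀ τ, π = π₁ ++ τ → τ = []) (hT : NOSet t r T) :
    NOSet t (s.replaceAt π₁ r) (A.erase π₁ ∪ T.image (π₁ ++ ·)) := by
  have hold : ∀ π ∈ A.erase π₁, ¬ Overlap t π π₁ ∧ ¬ π₁ <+: π := by
    intro π hπ
    obtain ⟨hne, hπA⟩ := Finset.mem_erase.1 hπ
    refine ⟨hA.2 π hπA π₁ hπ₁ hne, fun ⟨τ, hτ⟩ => hne ?_⟩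
    rw [← hτ, hinner π hπA τ hτ.symm, List.append_nil]
  refine ⟨fun π hπ => ?_, fun π hπ π' hπ' hne => ?_⟩
  · rcases Finset.mem_union.1 hπ with hπ | hπ
    · exact (hA.1 π (Finset.mem_of_mem_erase hπ)).replaceAt hlin hocc (hold π hπ).1
        (hold π hπ).2
    · obtain ⟨ρ, hρ, rfl⟩ := Finset.mem_image.1 hπ
      exact (hT.1 ρ hρ).replaceAt_append hocc
  rcases Finset.mem_union.1 hπ with hπ | hπ <;> rcases Finset.mem_union.1 hπ' with hπ' | hπ'
  · exact hA.2 π (Finset.mem_of_mem_erase hπ) π' (Finset.mem_of_mem_erase hπ') hne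
  · obtain ⟨ρ, -, rfl⟩ := Finset.mem_image.1 hπ'
    exact not_overlap_append (hold π hπ).1 (hold π hπ).2 ρ
  · obtain ⟨ρ, -, rfl⟩ := Finset.mem_image.1 hπ
    exact fun h => not_overlap_append (hold π' hπ').1 (hold π' hπ').2 ρ h.symm
  · obtain ⟨ρ, hρ, rfl⟩ := Finset.mem_image.1 hπ
    obtain ⟨ρ', hρ', rfl⟩ := Finset.mem_image.1 hπ'
    rw [overlap_append_append_iff]
    exact hT.2 ρ hρ ρ' hρ' fun h => hne (h ▸ rfl)

def positions (s : Tm S V) : Set (List ℕ) :=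
  {π | (subtermAt s π).isSome}

theorem positions_finite (s : Tm S V) : (positions s).Finite := by
  induction s using ind with
  | hvar x =>
    refine (Set.finite_singleton []).subset ?_
    rintro (_ | ⟨i, π⟩) h
    · rfl
    · simp [positions] at h
  | happ f ts ih =>
    refine (((Set.finite_iUnion fun i : Fin ts.length =>
      (ih _ (List.getElem_mem i.2)).image (List.cons i.1))).insert []).subset ?_
    rintro (_ | ⟨i, π⟩) h
    · exact Set.mem_insert _ _
    · obtain ⟨v, hv⟩ := Option.isSome_iff_exists.1 h
      rw [subtermAt_app_cons] at hv
      obtain ⟨u, hu, hπ⟩ := Option.bind_eq_some_iff.1 hv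
      obtain ⟨hi, rfl⟩ := List.getElem?_eq_some_iff.1 hu
      exact Set.mem_insert_of_mem _ (Set.mem_iUnion.2 ⟨⟨i, hi⟩, π, by simp [positions, hπ], rfl⟩)

theorem Matches.mem_positions {t s : Tm S V} {π : List ℕ} (h : Matches t s π) :
    π ∈ positions s :=
  let ⟨_, hσ⟩ := h
  by simp [positions, hσ]

theorem bddAbove_card_noSet (t s : Tm S V) :
    BddAbove {n | ∃ A : Finset (List ℕ), NOSet t s A ∧ A.card = n} := by
  refine ⟨(positions_finite s).toFinset.card, ?_⟩
  rintro _ ⟨A, hA, rfl⟩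
  exact Finset.card_le_card fun π hπ =>
    (positions_finite s).mem_toFinset.2 (hA.1 π hπ).mem_positions

theorem exists_noSet_card_eq_maxNO (t s : Tm S V) :
    ∃ A : Finset (List ℕ), NOSet t s A ∧ A.card = maxNO t s := by
  refine Nat.sSup_mem ?_ (bddAbove_card_noSet t s)
  exact ⟨0, ∅, ⟨by simp, by simp⟩, rfl⟩

theorem NOSet.card_le_maxNO {t s : Tm S V} {A : Finset (List ℕ)} (h : NOSet t s A) :
    A.card ≤ maxNO t s :=
  le_csSup (bddAbove_card_noSet t s) ⟨A, h, rfl⟩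

end Tm

/-- Let `t` be a linear term and `s = C[tδ]` with the occurrence of `t` at the hole
position `π₁` of `C`, where `π₁` is an innermost occurrence among a maximal set `Sset`
of pairwise non-overlapping occurrences of `t` in `s`. Then for any term `u` with
`V(u) ⊆ V(t)` we have `maxNO(t, C[uδ]) ≥ maxNO(t, u) + maxNO(t, s) − 1`. -/
theorem maxNO_replace_innermost {S V : Type} (t s u : Tm S V) (δ : V → Tm S V)
    (π₁ : List ℕ) (Sset : Finset (List ℕ))
    (hlin : Tm.Linear t)
    (hNO : Tm.NOSet t s Sset) (hmax : Sset.card = Tm.maxNO t s) (hπ₁ : π₁ ∈ Sset)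
    (hocc : Tm.subtermAt s π₁ = some (Tm.subst δ t))
    (hinner : ∀ π ∈ Sset, ∀ τ : List ℕ, π = π₁ ++ τ → τ = [])
    (hu : ∀ x : V, Tm.Occurs x u → Tm.Occurs x t) :
    Tm.maxNO t u + Tm.maxNO t s - 1 ≤
      Tm.maxNO t (Tm.replaceAt s π₁ (Tm.subst δ u)) := by
  obtain ⟨T, hT, hTcard⟩ := Tm.exists_noSet_card_eq_maxNO t u
  have hle := (hNO.replaceAt hlin hπ₁ hocc hinner (hT.subst δ)).card_le_maxNO
  rw [card_erase_union_image_append hπ₁ hinner] at hle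
  have hpos : 0 < Sset.card := Finset.card_pos.2 ⟨π₁, hπ₁⟩
  omega
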